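/- For every fixed x ≥ x_{mb}, the map λ ↦ w_{α,β,λ}(x) is strictly increasing on the interval (λ_{sph}(x), ∞) and tends to +∞ as λ → ∞. -/
import Mathlib

open Real Filter Topology Set

noncomputable section

/-- `h(x) = x(x−3) + 2α²(1−β²) + 2αβ√(x − α²(1−β²))`. -/
def hfun (α β x : ℝ) : ℝ :=
  x * (x - 3) + 2 * α ^ 2 * (1 - β ^ 2) + 2 * α * β * Real.sqrt (x - α ^ 2 * (1 - β ^ 2))

/-- `G(x) = x·Δ̄(x) − [h(x) − x(x−1)]²`, with `Δ̄(x) = x² − 2x + α²`. -/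
def Gfun (α β x : ℝ) : ℝ :=
  x * (x ^ 2 - 2 * x + α ^ 2) - (hfun α β x - x * (x - 1)) ^ 2

/-- The effective potential `w_{α,β,λ}(x) = αβλ/x² + √(Δ̄(x)(1 + λ²/x²))`. -/
def wfun (α β lam x : ℝ) : ℝ :=
  α * β * lam / x ^ 2 + Real.sqrt ((x ^ 2 - 2 * x + α ^ 2) * (1 + lam ^ 2 / x ^ 2))

/-- `λ_{sph}(x) = x(√(x − α²(1−β²)) − αβ)/√(h(x))`. -/
def lamsph (α β x : ℝ) : ℝ :=
  x * (Real.sqrt (x - α ^ 2 * (1 - β ^ 2)) - α * β) / Real.sqrt (hfun α β x)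

/-- `ε_{sph}(x) = (x² − 2x + α²(1−β²) + αβ√(x − α²(1−β²)))/(x√(h(x)))`. -/
def epssph (α β x : ℝ) : ℝ :=
  (x ^ 2 - 2 * x + α ^ 2 * (1 - β ^ 2) + α * β * Real.sqrt (x - α ^ 2 * (1 - β ^ 2))) /
    (x * Real.sqrt (hfun α β x))

private lemma pos_add_of_sq_lt (u v : ℝ) (hu : 0 < u) (hv : v ≤ 0) (h : v ^ 2 < u ^ 2) :
    0 < u + v := by nlinarith

private lemma pos_of_mul_pos_sq (A B : ℝ) (h3 : 0 < A ^ 2 * B) (h4 : 0 < A ^ 2) : 0 < B := by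
  rcases mul_pos_iff.1 h3 with ⟨_, hb⟩ | ⟨hneg, _⟩
  · exact hb
  · linarith

private lemma pos_of_mul_pos' (A B : ℝ) (h3 : 0 < A * B) (h4 : 0 < B) : 0 < A := by
  rcases mul_pos_iff.1 h3 with ⟨ha, _⟩ | ⟨_, hb⟩
  · exact ha
  · linarith

set_option maxHeartbeats 800000 in
/-- For every fixed `x ≥ x_{mb}`, `λ ↦ w_{α,β,λ}(x)` is strictly increasing on
`(λ_{sph}(x), ∞)` and tends to `+∞` as `λ → ∞`.  Here `x_{mb}` is the unique
solution of `ε_{sph}(x) = 1` in `(x_{ph}, x_{ms})`. -/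
theorem wfun_strictMono_in_lam (α β : ℝ) (hα0 : 0 ≤ α) (hα1 : α < 1)
    (hβ0 : -1 ≤ β) (hβ1 : β ≤ 1)
    (xph : ℝ)
    (hph1 : 1 + Real.sqrt (1 - α ^ 2) < xph) (hph2 : hfun α β xph = 0)
    (hph3 : ∀ x : ℝ, 1 + Real.sqrt (1 - α ^ 2) < x → x < xph → hfun α β x < 0)
    (hph4 : ∀ x : ℝ, xph < x → 0 < hfun α β x)
    (xms : ℝ)
    (hms1 : xph < xms) (hms2 : Gfun α β xms = 0)
    (hms3 : ∀ x : ℝ, xph ≤ x → x < xms → Gfun α β x < 0)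
    (hms4 : ∀ x : ℝ, xms < x → 0 < Gfun α β x)
    (xmb : ℝ)
    (hmb1 : xph < xmb) (hmb2 : xmb < xms) (hmb3 : epssph α β xmb = 1)
    (hmb4 : ∀ x : ℝ, xph < x → x < xms → epssph α β x = 1 → x = xmb) :
    ∀ x : ℝ, xmb ≤ x →
      StrictMonoOn (fun lam => wfun α β lam x) (Set.Ioi (lamsph α β x)) ∧
      Tendsto (fun lam => wfun α β lam x) atTop atTop := by
  intro x hx
  have hb2 : β ^ 2 ≤ 1 := by nlinarith
  have ha2 : α ^ 2 < 1 := by nlinarith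
  have hxph : xph < x := lt_of_lt_of_le hmb1 hx
  have hsq0 : 0 ≤ Real.sqrt (1 - α ^ 2) := Real.sqrt_nonneg _
  have hx1 : 1 < x := by
    have := lt_trans hph1 hxph
    linarith
  have hx0 : 0 < x := by linarith
  have hΔ : 0 < x ^ 2 - 2 * x + α ^ 2 := by
    have h1 : 1 + Real.sqrt (1 - α ^ 2) < x := lt_trans hph1 hxph
    have h4 : 0 < (x - 1 - Real.sqrt (1 - α ^ 2)) * (x - 1 + Real.sqrt (1 - α ^ 2)) :=
      mul_pos (by linarith) (by linarith)
    have h5 := Real.sq_sqrt (by nlinarith : (0:ℝ) ≤ 1 - α ^ 2)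
    nlinarith [h4, h5]
  have hh : 0 < hfun α β x := hph4 x hxph
  have hxc : 0 < x - α ^ 2 * (1 - β ^ 2) := by nlinarith
  clear hph1 hph2 hph3 hph4 hms1 hms2 hms3 hms4 hmb1 hmb2 hmb3 hmb4 hx hxph hsq0
  clear hβ0 hβ1 hα1 hα0 xph xms xmb
  set s : ℝ := Real.sqrt (x - α ^ 2 * (1 - β ^ 2)) with hs
  have hs2 : s ^ 2 = x - α ^ 2 * (1 - β ^ 2) := by rw [hs]; exact Real.sq_sqrt hxc.le
  have hs0 : 0 < s := by rw [hs]; exact Real.sqrt_pos.2 hxc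
  have hsab : (α * β) ^ 2 < s ^ 2 := by
    have : s ^ 2 - (α * β) ^ 2 = x - α ^ 2 := by rw [hs2]; ring
    linarith
  have hsa : α * β < s := by nlinarith [hsab, hs0]
  have hhdef : hfun α β x = x ^ 2 - 3 * x + 2 * (α ^ 2 * (1 - β ^ 2)) + 2 * (α * β) * s := by
    unfold hfun; rw [← hs]; ring
  set rh : ℝ := Real.sqrt (hfun α β x) with hrh
  have hrh2 : rh ^ 2 = hfun α β x := by rw [hrh]; exact Real.sq_sqrt hh.le
  have hrh0 : 0 < rh := by rw [hrh]; exact Real.sqrt_pos.2 hh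
  set rΔ : ℝ := Real.sqrt (x ^ 2 - 2 * x + α ^ 2) with hrΔ
  have hrΔ2 : rΔ ^ 2 = x ^ 2 - 2 * x + α ^ 2 := by rw [hrΔ]; exact Real.sq_sqrt hΔ.le
  have hrΔ0 : 0 < rΔ := by rw [hrΔ]; exact Real.sqrt_pos.2 hΔ
  set lam0 : ℝ := lamsph α β x with hlam0d
  have hlam0 : lam0 = x * (s - α * β) / rh := by
    rw [hlam0d]; unfold lamsph; rw [← hs, ← hrh]
  have hlam0pos : 0 < lam0 := by
    rw [hlam0]; exact div_pos (mul_pos hx0 (sub_pos.2 hsa)) hrh0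
  -- the key algebraic identity
  have hid : (s - α * β) ^ 2 * ((x ^ 2 - 2 * x + α ^ 2) - (α * β) ^ 2)
      = (x ^ 2 - 2 * x + α ^ 2) * s * (s - 2 * (α * β)) + (α * β) ^ 2 * hfun α β x := by
    linear_combination (-(α * β) ^ 2) * hs2 - (α * β) ^ 2 * hhdef
  -- Δ − a² > 0 when a := αβ < 0
  have hdneg : α * β < 0 → 0 < (x ^ 2 - 2 * x + α ^ 2) - (α * β) ^ 2 := by
    intro hab
    have h1 : 0 < (x ^ 2 - 2 * x + α ^ 2) * s * (s - 2 * (α * β)) :=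
      mul_pos (mul_pos hΔ hs0) (by linarith)
    have h2 : 0 ≤ (α * β) ^ 2 * hfun α β x := by positivity
    have h3 : 0 < (s - α * β) ^ 2 * ((x ^ 2 - 2 * x + α ^ 2) - (α * β) ^ 2) := by
      rw [hid]; linarith
    exact pos_of_mul_pos_sq _ _ h3 (pow_pos (sub_pos.2 hsa) 2)
  -- lam0² · h = x² (s−αβ)²
  have hlamsq : lam0 ^ 2 * hfun α β x = x ^ 2 * (s - α * β) ^ 2 := by
    rw [hlam0, div_pow, hrh2, div_mul_cancel₀ _ hh.ne']
    ring
  -- key inequality: λ₀² (x²Δ − a²) ≥ a² x²  (when a < 0)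
  have hkey : α * β < 0 →
      (α * β) ^ 2 * x ^ 2 ≤ lam0 ^ 2 * (x ^ 2 * (x ^ 2 - 2 * x + α ^ 2) - (α * β) ^ 2) := by
    intro hab
    have hs2a : 0 < s - 2 * (α * β) := by linarith
    have hm : x ^ 2 * (s - α * β) ^ 2 * ((x ^ 2 - 2 * x + α ^ 2) - (α * β) ^ 2)
        - (α * β) ^ 2 * x ^ 2 * hfun α β x
        = x ^ 2 * ((x ^ 2 - 2 * x + α ^ 2) * s * (s - 2 * (α * β))) := by
      linear_combination x ^ 2 * hid
    have hm2 : 0 ≤ x ^ 2 * ((x ^ 2 - 2 * x + α ^ 2) * s * (s - 2 * (α * β))) :=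
      mul_nonneg (sq_nonneg x) (mul_pos (mul_pos hΔ hs0) hs2a).le
    have m2 : (α * β) ^ 2 * x ^ 2 * hfun α β x
        ≤ x ^ 2 * (s - α * β) ^ 2 * ((x ^ 2 - 2 * x + α ^ 2) - (α * β) ^ 2) := by linarith
    have m1 : x ^ 2 * (s - α * β) ^ 2 * ((x ^ 2 - 2 * x + α ^ 2) - (α * β) ^ 2)
        ≤ x ^ 2 * (s - α * β) ^ 2 * (x ^ 2 * (x ^ 2 - 2 * x + α ^ 2) - (α * β) ^ 2) := by
      apply mul_le_mul_of_nonneg_left _ (by positivity)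
      have h6 : 0 ≤ (x ^ 2 - 1) * (x ^ 2 - 2 * x + α ^ 2) :=
        mul_nonneg (by nlinarith) hΔ.le
      linarith
    have e1 : lam0 ^ 2 * (x ^ 2 * (x ^ 2 - 2 * x + α ^ 2) - (α * β) ^ 2) * hfun α β x
        = x ^ 2 * (s - α * β) ^ 2 * (x ^ 2 * (x ^ 2 - 2 * x + α ^ 2) - (α * β) ^ 2) := by
      linear_combination (x ^ 2 * (x ^ 2 - 2 * x + α ^ 2) - (α * β) ^ 2) * hlamsq
    have h7 : (α * β) ^ 2 * x ^ 2 * hfun α β x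
        ≤ lam0 ^ 2 * (x ^ 2 * (x ^ 2 - 2 * x + α ^ 2) - (α * β) ^ 2) * hfun α β x := by
      rw [e1]; linarith
    exact le_of_mul_le_mul_right h7 hh
  -- strict positivity of the "derivative" beyond lam0
  have Astrict : ∀ lam : ℝ, lam0 < lam →
      0 < x * rΔ * lam + (α * β) * Real.sqrt (x ^ 2 + lam ^ 2) := by
    intro lam hlam
    have hlamp : 0 < lam := lt_trans hlam0pos hlam
    have hS2 : (Real.sqrt (x ^ 2 + lam ^ 2)) ^ 2 = x ^ 2 + lam ^ 2 :=
      Real.sq_sqrt (by positivity)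
    have hSp : 0 < Real.sqrt (x ^ 2 + lam ^ 2) := Real.sqrt_pos.2 (by positivity)
    set S : ℝ := Real.sqrt (x ^ 2 + lam ^ 2)
    rcases le_or_gt 0 (α * β) with hab | hab
    · have h1 : 0 < x * rΔ * lam := by positivity
      have h2 : 0 ≤ (α * β) * S := mul_nonneg hab hSp.le
      linarith
    · have hk := hkey hab
      have hd := hdneg hab
      have hD2 : 0 < x ^ 2 * (x ^ 2 - 2 * x + α ^ 2) - (α * β) ^ 2 := by
        have h6 : 0 ≤ (x ^ 2 - 1) * (x ^ 2 - 2 * x + α ^ 2) :=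
          mul_nonneg (by nlinarith) hΔ.le
        linarith
      have hlam2 : lam0 ^ 2 < lam ^ 2 := by
        rw [sq, sq]; exact mul_self_lt_mul_self hlam0pos.le hlam
      have t1 : lam0 ^ 2 * (x ^ 2 * (x ^ 2 - 2 * x + α ^ 2) - (α * β) ^ 2)
          < lam ^ 2 * (x ^ 2 * (x ^ 2 - 2 * x + α ^ 2) - (α * β) ^ 2) :=
        mul_lt_mul_of_pos_right hlam2 hD2
      have hfin : (α * β) ^ 2 * (x ^ 2 + lam ^ 2)
          < x ^ 2 * (x ^ 2 - 2 * x + α ^ 2) * lam ^ 2 := by linarith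
      have hsq : ((α * β) * S) ^ 2 < (x * rΔ * lam) ^ 2 := by
        have eL : ((α * β) * S) ^ 2 = (α * β) ^ 2 * (x ^ 2 + lam ^ 2) := by
          rw [mul_pow, hS2]
        have eR : (x * rΔ * lam) ^ 2 = x ^ 2 * (x ^ 2 - 2 * x + α ^ 2) * lam ^ 2 := by
          calc (x * rΔ * lam) ^ 2 = x ^ 2 * rΔ ^ 2 * lam ^ 2 := by ring
            _ = x ^ 2 * (x ^ 2 - 2 * x + α ^ 2) * lam ^ 2 := by rw [hrΔ2]
        rw [eL, eR]; exact hfin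
      exact pos_add_of_sq_lt _ _ (by positivity)
        (mul_nonpos_of_nonpos_of_nonneg hab.le hSp.le) hsq
  -- rewriting of wfun
  have wrew : ∀ lam : ℝ, wfun α β lam x
      = (α * β) * lam / x ^ 2 + rΔ * Real.sqrt (x ^ 2 + lam ^ 2) / x := by
    intro lam
    unfold wfun
    have e : (x ^ 2 - 2 * x + α ^ 2) * (1 + lam ^ 2 / x ^ 2)
        = ((x ^ 2 - 2 * x + α ^ 2) * (x ^ 2 + lam ^ 2)) / x ^ 2 := by
      field_simp
    rw [e, Real.sqrt_div (by positivity : (0:ℝ) ≤ (x ^ 2 - 2 * x + α ^ 2) * (x ^ 2 + lam ^ 2)),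
      Real.sqrt_mul hΔ.le, Real.sqrt_sq hx0.le]
  constructor
  · intro l1 h1 l2 h2 h12
    simp only [Set.mem_Ioi] at h1 h2
    have A1 := Astrict l1 h1
    have A2 := Astrict l2 h2
    have hS1sq : (Real.sqrt (x ^ 2 + l1 ^ 2)) ^ 2 = x ^ 2 + l1 ^ 2 := Real.sq_sqrt (by positivity)
    have hS2sq : (Real.sqrt (x ^ 2 + l2 ^ 2)) ^ 2 = x ^ 2 + l2 ^ 2 := Real.sq_sqrt (by positivity)
    have hS1p : 0 < Real.sqrt (x ^ 2 + l1 ^ 2) := Real.sqrt_pos.2 (by positivity)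
    have hS2p : 0 < Real.sqrt (x ^ 2 + l2 ^ 2) := Real.sqrt_pos.2 (by positivity)
    set S1 : ℝ := Real.sqrt (x ^ 2 + l1 ^ 2)
    set S2 : ℝ := Real.sqrt (x ^ 2 + l2 ^ 2)
    have key : 0 < (α * β) * (l2 - l1) + x * rΔ * (S2 - S1) := by
      have hprod : ((α * β) * (l2 - l1) + x * rΔ * (S2 - S1)) * (S1 + S2)
          = (l2 - l1) * ((x * rΔ * l1 + (α * β) * S1) + (x * rΔ * l2 + (α * β) * S2)) := by
        linear_combination x * rΔ * hS2sq - x * rΔ * hS1sq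
      have h3 : 0 < ((α * β) * (l2 - l1) + x * rΔ * (S2 - S1)) * (S1 + S2) := by
        rw [hprod]; exact mul_pos (sub_pos.2 h12) (add_pos A1 A2)
      exact pos_of_mul_pos' _ _ h3 (add_pos hS1p hS2p)
    show wfun α β l1 x < wfun α β l2 x
    rw [wrew l1, wrew l2]
    have e1 : (α * β) * l1 / x ^ 2 + rΔ * S1 / x = ((α * β) * l1 + x * rΔ * S1) / x ^ 2 := by
      field_simp
    have e2 : (α * β) * l2 / x ^ 2 + rΔ * S2 / x = ((α * β) * l2 + x * rΔ * S2) / x ^ 2 := by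
      field_simp
    rw [e1, e2, div_lt_div_iff₀ (by positivity) (by positivity)]
    have h8 : 0 < ((α * β) * (l2 - l1) + x * rΔ * (S2 - S1)) * x ^ 2 :=
      mul_pos key (pow_pos hx0 2)
    linarith
  · have hcoef : 0 < α * β + x * rΔ := by
      rcases le_or_gt 0 (α * β) with hab | hab
      · have := mul_pos hx0 hrΔ0; linarith
      · have hd := hdneg hab
        have h1 : -(α * β) < rΔ := by nlinarith [hrΔ2, hrΔ0, hd]
        have h2 : rΔ ≤ x * rΔ := by nlinarith [hrΔ0, hx1]
        linarith
    have hlin : Tendsto (fun lam : ℝ => (α * β + x * rΔ) / x ^ 2 * lam) atTop atTop :=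
      Tendsto.const_mul_atTop (div_pos hcoef (by positivity)) tendsto_id
    apply tendsto_atTop_mono' atTop _ hlin
    filter_upwards [eventually_ge_atTop (0 : ℝ)] with lam hlam
    rw [wrew lam]
    have hSl : lam ≤ Real.sqrt (x ^ 2 + lam ^ 2) := by
      have h1 : Real.sqrt (lam ^ 2) ≤ Real.sqrt (x ^ 2 + lam ^ 2) :=
        Real.sqrt_le_sqrt (by nlinarith)
      rwa [Real.sqrt_sq hlam] at h1
    have e1 : (α * β) * lam / x ^ 2 + rΔ * Real.sqrt (x ^ 2 + lam ^ 2) / x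
        = ((α * β) * lam + x * rΔ * Real.sqrt (x ^ 2 + lam ^ 2)) / x ^ 2 := by
      field_simp
    rw [e1, div_mul_eq_mul_div, div_le_div_iff₀ (by positivity) (by positivity)]
    have h5 : 0 ≤ x * rΔ * (Real.sqrt (x ^ 2 + lam ^ 2) - lam) :=
      mul_nonneg (mul_pos hx0 hrΔ0).le (by linarith)
    have h6 : 0 ≤ x ^ 2 * (x * rΔ * (Real.sqrt (x ^ 2 + lam ^ 2) - lam)) :=
      mul_nonneg (sq_nonneg x) h5
    linarith

end
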